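/- Doubly exponential decay of badness. Suppose the strictly increasing sequences Gamma, gamma satisfy: Gamma_1 >= 2 and Gamma_k < gamma_k/2 for all k >= 1; inf over k >= 1 of Gamma_{k+1}/theta_k >= 5, where theta_k := sum_{h=1}^k (Gamma_h + gamma_h); and a_0 := sum over k >= 0 of 2^{-k} log( [2(Gamma_{k+1}+gamma_{k+1})+1]^2 ) < infinity. Let Q be a translation-invariant probability measure on Omega with p := ess sup_omega Q(omega_0 = 1 | sigma-algebra generated by (omega_j)_{j different from 0})(omega), and assume p < e^{-a_0/2}; set a := -log p - a_0/2 > 0. Then for every x in L^(l) and every k >= 0: Q(x belongs to BB_k) <= exp(-a 2^k). -/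

import Mathlib

open MeasureTheory Real

/-! Multi-scale geometry of the bad region.

The rescaled lattice `L^(l) = (lℤ)²` is identified with `ℤ²` via the bijection
`i ↦ l·i`; under this identification the rescaled distance `d_l` on `L^(l)` becomes the
ℓ¹ distance on `ℤ²`.  Accordingly, sites of `L^(l)` are represented by points of `ℤ²`
and all distances below are measured in units of `l`. -/

/-- Sites of the (rescaled) lattice. -/
abbrev Site : Type := ℤ × ℤ

/-- The ℓ¹ distance on the (rescaled) lattice, i.e. `d_l` in units of `l`. -/
def dist1 (x y : Site) : ℕ := (x.1 - y.1).natAbs + (x.2 - y.2).natAbs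

/-- The space `Ω = {0,1}^{L^(l)}`; `true` encodes `1` (bad), `false` encodes `0` (good). -/
abbrev Omega : Type := Site → Bool

/-- The closed ball `B^(l)_r(x)` of (real) radius `r` around `x`. -/
def ball1 (r : ℝ) (x : Site) : Set Site := {j | (dist1 x j : ℝ) ≤ r}

/-- `θ_k := ∑_{h=1}^k (Γ_h + γ_h)`. -/
noncomputable def thetaSeq (Γ γ : ℕ → ℝ) (k : ℕ) : ℝ := ∑ h ∈ Finset.Icc 1 k, (Γ h + γ h)

/-- `g` is a `k`-gentle atom for the bad set `B`: `g = B^(l)_{Γ_k}(x) ∩ B` for some `x ∈ B`,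
`diam_l(g) ≤ Γ_k`, and `d_l(g, B \ g) > γ_k`. -/
def kAtom (Γ γ : ℕ → ℝ) (k : ℕ) (B : Set Site) (g : Set Site) : Prop :=
  (∃ x ∈ B, g = ball1 (Γ k) x ∩ B) ∧
    (∀ x ∈ g, ∀ y ∈ g, (dist1 x y : ℝ) ≤ Γ k) ∧
    ∀ x ∈ g, ∀ y ∈ B \ g, γ k < (dist1 x y : ℝ)

/-- The union of all `k`-gentle atoms of the bad set `B`. -/
def gentleStep (Γ γ : ℕ → ℝ) (k : ℕ) (B : Set Site) : Set Site :=
  {y | ∃ g : Set Site, kAtom Γ γ k B g ∧ y ∈ g}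

/-- The `k`-bad sites `BB_k(ω)`:  `BB_0(ω) = {i : ω_i = 1}` and
`BB_k(ω) = BB_{k-1}(ω) \ GG_k(ω)`. -/
def BB (Γ γ : ℕ → ℝ) (ω : Omega) : ℕ → Set Site
  | 0 => {i | ω i = true}
  | k + 1 => BB Γ γ ω k \ gentleStep Γ γ (k + 1) (BB Γ γ ω k)

/-- The `k`-gentle sites `GG_k(ω)`:  `GG_0(ω) = {i : ω_i = 0}` and, for `k ≥ 1`,
`GG_k(ω)` is the union of the `k`-gentle atoms of `BB_{k-1}(ω)`. -/
def GG (Γ γ : ℕ → ℝ) (ω : Omega) : ℕ → Set Site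
  | 0 => {i | ω i = false}
  | k + 1 => gentleStep Γ γ (k + 1) (BB Γ γ ω k)

/-- The σ-algebra generated by the coordinates `ω_j` with `j ≠ 0`. -/
def extSigma : MeasurableSpace Omega :=
  MeasurableSpace.comap (fun (ω : Omega) (j : {j : Site // j ≠ 0}) => ω j) inferInstance

/-- A version of the conditional probability `Q(ω_0 = 1 | σ(ω_j, j ≠ 0))`. -/
noncomputable def condBadProb (Q : Measure Omega) : Omega → ℝ :=
  Q[Set.indicator {ω : Omega | ω 0 = true} (fun _ => (1 : ℝ)) | extSigma]

/-- The strength of the disorder: `p = ess sup_ω Q(ω_0 = 1 | σ(ω_j, j ≠ 0))(ω)`. -/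
noncomputable def badParam (Q : Measure Omega) : ℝ := essSup (condBadProb Q) Q

/-- Invariance of `Q` under all lattice translations of `L^(l)`. -/
def TransInvariant (Q : Measure Omega) : Prop :=
  ∀ v : Site, Measure.map (fun (ω : Omega) (x : Site) => ω (x + v)) Q = Q

/-- `a₀ := ∑_{k≥0} 2^{-k} log([2(Γ_{k+1}+γ_{k+1})+1]²)`. -/
noncomputable def aZero (Γ γ : ℕ → ℝ) : ℝ :=
  ∑' k : ℕ, (2 : ℝ) ^ (-(k : ℤ)) * Real.log ((2 * (Γ (k + 1) + γ (k + 1)) + 1) ^ 2)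

/-
A `k`-bad site `x` is `(k-1)`-bad but not `k`-gentle, so its `Γ_k`-cluster in `BB_{k-1}` is either
wider than `Γ_k` or closer than `γ_k` to the rest of `BB_{k-1}`; either way there is a second
`(k-1)`-bad site `y` with `Γ_k / 2 < d(x, y) ≤ Γ_k + γ_k`. Recursing into `x` and `y` produces `2^k`
sites of `BB_0` within distance `θ_k` of `x`, and they are distinct because `Γ_{k+1} ≥ 4 θ_k` keeps
the two halves of the recursion apart. Such a configuration is described by the `2^k - 1` relative
displacements, so there are at most `∏_j (2 (Γ_j + γ_j) + 1)^{2 ⋅ 2^{k-j}} ≤ exp (2^k a₀ / 2)` of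
them. Conditioning on all other sites and translating each site to the origin, `2^k` given distinct
sites are all bad with probability at most `p^{2^k}`.
-/

lemma dist1_self (x : Site) : dist1 x x = 0 := by simp [dist1]

lemma dist1_comm (x y : Site) : dist1 x y = dist1 y x := by
  simp only [dist1]; omega

lemma dist1_triangle (x y z : Site) : (dist1 x z : ℝ) ≤ dist1 x y + dist1 y z := by
  have : dist1 x z ≤ dist1 x y + dist1 y z := by simp only [dist1]; omega
  exact_mod_cast this

noncomputable def siteBox (r : ℤ) : Finset Site := Finset.Icc (-r) r ×ˢ Finset.Icc (-r) r

lemma sub_mem_siteBox_floor {x y : Site} {R : ℝ} (h : (dist1 x y : ℝ) ≤ R) :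
    y - x ∈ siteBox ⌊R⌋ := by
  have hd : (|(y - x).1| + |(y - x).2| : ℤ) = dist1 x y := by simp [dist1, abs_sub_comm]
  rw [← Int.cast_natCast, ← hd, Int.cast_add] at h
  simp only [siteBox, Finset.mem_product, Finset.mem_Icc]
  refine ⟨abs_le.mp (Int.le_floor.mpr ?_), abs_le.mp (Int.le_floor.mpr ?_)⟩ <;>
    linarith [Int.cast_nonneg (R := ℝ) (abs_nonneg (y - x).1),
      Int.cast_nonneg (R := ℝ) (abs_nonneg (y - x).2)]

lemma card_siteBox_floor_le {R : ℝ} (hR : 0 ≤ R) :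
    ((siteBox ⌊R⌋).card : ℝ) ≤ (2 * R + 1) ^ 2 := by
  have hr : 0 ≤ ⌊R⌋ := Int.floor_nonneg.mpr hR
  have hcard : ((siteBox ⌊R⌋).card : ℤ) = (2 * ⌊R⌋ + 1) ^ 2 := by
    rw [siteBox, Finset.card_product, Int.card_Icc, Nat.cast_mul, Int.toNat_of_nonneg (by omega)]
    ring
  rw [← Int.cast_natCast, hcard]
  push_cast
  gcongr
  exact Int.floor_le R

lemma card_biUnion_le_card_mul_of_le {ι β : Type*} [DecidableEq β] {s : Finset ι}
    {f : ι → Finset β} {c : ℝ} (h : ∀ a ∈ s, ((f a).card : ℝ) ≤ c) :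
    ((s.biUnion f).card : ℝ) ≤ s.card * c :=
  calc ((s.biUnion f).card : ℝ) ≤ ∑ a ∈ s, ((f a).card : ℝ) := by
        exact_mod_cast Finset.card_biUnion_le
    _ ≤ s.card * c := by simpa using Finset.sum_le_card_nsmul s _ c h

/-- Candidate witnesses for `x ∈ BB_k`: a witness at level `k` is the concatenation of witnesses at
level `k - 1` for `x` and for some `x + v` with `v` in the box of radius `R k`. -/
noncomputable def doublingTree (R : ℕ → ℝ) : ℕ → Site → Finset (List Site)
  | 0, x => {[x]}
  | k + 1, x =>
    (siteBox ⌊R (k + 1)⌋).biUnion fun v =>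
      (doublingTree R k x).biUnion fun L₁ => (doublingTree R k (x + v)).image (L₁ ++ ·)

lemma length_of_mem_doublingTree {R : ℕ → ℝ} {k : ℕ} {x : Site} {L : List Site}
    (hL : L ∈ doublingTree R k x) : L.length = 2 ^ k := by
  induction k generalizing x L with
  | zero => simp_all [doublingTree]
  | succ k ih =>
    simp only [doublingTree, Finset.mem_biUnion, Finset.mem_image] at hL
    obtain ⟨v, -, L₁, hL₁, L₂, hL₂, rfl⟩ := hL
    rw [List.length_append, ih hL₁, ih hL₂, pow_succ, mul_two]

lemma append_mem_doublingTree {R : ℕ → ℝ} {k : ℕ} {x y : Site} {L₁ L₂ : List Site}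
    (hL₁ : L₁ ∈ doublingTree R k x) (hL₂ : L₂ ∈ doublingTree R k y)
    (hxy : (dist1 x y : ℝ) ≤ R (k + 1)) : L₁ ++ L₂ ∈ doublingTree R (k + 1) x := by
  simp only [doublingTree, Finset.mem_biUnion, Finset.mem_image]
  exact ⟨y - x, sub_mem_siteBox_floor hxy, L₁, hL₁, L₂, by rwa [add_sub_cancel], rfl⟩

lemma card_doublingTree_le {R : ℕ → ℝ} (hR : ∀ k, 0 ≤ R (k + 1)) (k : ℕ) (x : Site) :
    ((doublingTree R k x).card : ℝ) ≤ Real.exp (2 ^ k *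
      (∑ j ∈ Finset.range k, (2 : ℝ) ^ (-(j : ℤ)) * Real.log ((2 * R (j + 1) + 1) ^ 2)) / 2) := by
  induction k generalizing x with
  | zero => simp [doublingTree]
  | succ k ih =>
    set M := Real.exp (2 ^ k *
      (∑ j ∈ Finset.range k, (2 : ℝ) ^ (-(j : ℤ)) * Real.log ((2 * R (j + 1) + 1) ^ 2)) / 2)
    have hc : 0 < (2 * R (k + 1) + 1) ^ 2 := by have := hR k; positivity
    have htwo : (2 : ℝ) ^ k * 2 ^ (-(k : ℤ)) = 1 := by
      rw [zpow_neg, zpow_natCast, mul_inv_cancel₀ (by positivity)]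
    calc ((doublingTree R (k + 1) x).card : ℝ)
        ≤ (siteBox ⌊R (k + 1)⌋).card * (M * M) := by
          rw [doublingTree]
          refine card_biUnion_le_card_mul_of_le fun v _ => ?_
          refine (card_biUnion_le_card_mul_of_le (β := List Site) fun L₁ _ => ?_).trans
            (mul_le_mul_of_nonneg_right (ih x) (Real.exp_pos _).le)
          exact le_trans (by exact_mod_cast Finset.card_image_le) (ih (x + v))
      _ ≤ (2 * R (k + 1) + 1) ^ 2 * (M * M) := by
          gcongr; exact card_siteBox_floor_le (hR k)
      _ = _ := by
          rw [← Real.exp_log hc, ← Real.exp_add, ← Real.exp_add, Finset.sum_range_succ]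
          congr 1
          linear_combination (-Real.log ((2 * R (k + 1) + 1) ^ 2)) * htwo

lemma card_doublingTree_le_exp_aZero {Γ γ : ℕ → ℝ} (hR : ∀ k, 0 ≤ Γ (k + 1) + γ (k + 1))
    (ha0 : Summable fun k : ℕ =>
      (2 : ℝ) ^ (-(k : ℤ)) * Real.log ((2 * (Γ (k + 1) + γ (k + 1)) + 1) ^ 2))
    (k : ℕ) (x : Site) :
    ((doublingTree (fun j => Γ j + γ j) k x).card : ℝ) ≤ Real.exp (2 ^ k * aZero Γ γ / 2) := by
  refine (card_doublingTree_le hR k x).trans ?_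
  gcongr
  exact ha0.sum_le_tsum _ fun j _ =>
    mul_nonneg (by positivity) (Real.log_nonneg (by nlinarith [hR j]))

def allBad (L : List Site) : Set Omega := {ω | ∀ i ∈ L, ω i = true}

section Geometry

variable {Γ γ : ℕ → ℝ}

lemma exists_far_of_not_mem_gentleStep {k : ℕ} (hΓ : 0 ≤ Γ k) (hγ : 0 ≤ γ k) {B : Set Site}
    {x : Site} (hxB : x ∈ B) (hx : x ∉ gentleStep Γ γ k B) :
    ∃ y ∈ B, Γ k / 2 < dist1 x y ∧ (dist1 x y : ℝ) ≤ Γ k + γ k := by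
  have hxg : x ∈ ball1 (Γ k) x ∩ B := ⟨by simpa [ball1, dist1_self] using hΓ, hxB⟩
  have hnot : ¬ kAtom Γ γ k B (ball1 (Γ k) x ∩ B) := fun h => hx ⟨_, h, hxg⟩
  simp only [kAtom, not_and_or, not_forall, not_le, not_lt, exists_prop] at hnot
  rcases hnot with hnot | ⟨u, hu, w, hw, huw⟩ | ⟨u, hu, y, ⟨hyB, hyg⟩, huy⟩
  · exact absurd ⟨x, hxB, rfl⟩ hnot
  · have hu' : (dist1 x u : ℝ) ≤ Γ k := hu.1
    have hw' : (dist1 x w : ℝ) ≤ Γ k := hw.1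
    have := dist1_triangle u x w
    rw [dist1_comm u x] at this
    by_cases hc : Γ k / 2 < dist1 x u
    · exact ⟨u, hu.2, hc, by linarith⟩
    · exact ⟨w, hw.2, by linarith, by linarith⟩
  · have hu' : (dist1 x u : ℝ) ≤ Γ k := hu.1
    have hy : Γ k < dist1 x y := not_le.mp fun h => hyg ⟨h, hyB⟩
    have := dist1_triangle x u y
    exact ⟨y, hyB, by linarith, by linarith⟩

lemma thetaSeq_succ (k : ℕ) :
    thetaSeq Γ γ (k + 1) = thetaSeq Γ γ k + (Γ (k + 1) + γ (k + 1)) := by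
  rw [thetaSeq, Finset.sum_Icc_succ_top (by omega), ← thetaSeq]

lemma thetaSeq_nonneg (hΓ : ∀ k, 1 ≤ k → 0 ≤ Γ k) (hγ : ∀ k, 1 ≤ k → 0 ≤ γ k) (k : ℕ) :
    0 ≤ thetaSeq Γ γ k :=
  Finset.sum_nonneg fun h hh => add_nonneg (hΓ h (Finset.mem_Icc.mp hh).1)
    (hγ h (Finset.mem_Icc.mp hh).1)

lemma four_mul_thetaSeq_le (hΓ : ∀ k, 1 ≤ k → 0 ≤ Γ k) (hγ : ∀ k, 1 ≤ k → 0 ≤ γ k)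
    (hsteep : ∀ k, 1 ≤ k → 5 ≤ Γ (k + 1) / thetaSeq Γ γ k) (k : ℕ) :
    4 * thetaSeq Γ γ k ≤ Γ (k + 1) := by
  have hθ := thetaSeq_nonneg hΓ hγ k
  rcases Nat.eq_zero_or_pos k with rfl | hk
  · simpa [thetaSeq] using hΓ 1 le_rfl
  · have h5 := hsteep k hk
    rcases hθ.eq_or_lt with hθ0 | hθpos
    · rw [← hθ0, div_zero] at h5; norm_num at h5
    · rw [le_div_iff₀ hθpos] at h5; linarith

lemma nodup_append_of_lt_dist1 {L₁ L₂ : List Site} {x y : Site} {θ : ℝ} (h₁ : L₁.Nodup)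
    (h₂ : L₂.Nodup) (hL₁ : ∀ i ∈ L₁, (dist1 x i : ℝ) ≤ θ) (hL₂ : ∀ i ∈ L₂, (dist1 y i : ℝ) ≤ θ)
    (hxy : 2 * θ < dist1 x y) : (L₁ ++ L₂).Nodup := by
  refine List.nodup_append.mpr ⟨h₁, h₂, fun a ha b hb hab => ?_⟩
  subst hab
  have := dist1_triangle x a y
  rw [dist1_comm a y] at this
  linarith [hL₁ a ha, hL₂ a hb]

lemma exists_mem_doublingTree_of_mem_BB (hΓ : ∀ k, 1 ≤ k → 0 ≤ Γ k)
    (hγ : ∀ k, 1 ≤ k → 0 ≤ γ k) (hsteep : ∀ k, 1 ≤ k → 5 ≤ Γ (k + 1) / thetaSeq Γ γ k)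
    {ω : Omega} {k : ℕ} {x : Site} (hx : x ∈ BB Γ γ ω k) :
    ∃ L ∈ doublingTree (fun j => Γ j + γ j) k x, L.Nodup ∧ ω ∈ allBad L ∧
      ∀ i ∈ L, (dist1 x i : ℝ) ≤ thetaSeq Γ γ k := by
  induction k generalizing x with
  | zero => exact ⟨[x], by simp [doublingTree], by simp, by simpa [allBad, BB] using hx,
      by simp [dist1_self, thetaSeq]⟩
  | succ k ih =>
    obtain ⟨hxk, hxg⟩ := hx
    obtain ⟨y, hyk, hxy_lo, hxy_hi⟩ :=
      exists_far_of_not_mem_gentleStep (hΓ _ k.succ_pos) (hγ _ k.succ_pos) hxk hxg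
    obtain ⟨L₁, hL₁, hnd₁, hbad₁, hθ₁⟩ := ih hxk
    obtain ⟨L₂, hL₂, hnd₂, hbad₂, hθ₂⟩ := ih hyk
    have hθ := thetaSeq_nonneg hΓ hγ k
    have hsep := four_mul_thetaSeq_le hΓ hγ hsteep k
    refine ⟨L₁ ++ L₂, append_mem_doublingTree hL₁ hL₂ hxy_hi,
      nodup_append_of_lt_dist1 hnd₁ hnd₂ hθ₁ hθ₂ (by linarith), ?_, fun i hi => ?_⟩
    · intro i hi
      rcases List.mem_append.mp hi with h | h
      exacts [hbad₁ i h, hbad₂ i h]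
    · rw [thetaSeq_succ]
      rcases List.mem_append.mp hi with h | h
      · linarith [hθ₁ i h, hγ _ k.succ_pos]
      · linarith [hθ₂ i h, dist1_triangle x y i]

end Geometry

section Probability

variable (Q : Measure Omega)

lemma measurableSet_eval_eq_true (i : Site) : MeasurableSet {ω : Omega | ω i = true} :=
  measurableSet_eq_fun (measurable_pi_apply i) measurable_const

lemma measurableSet_allBad (L : List Site) : MeasurableSet (allBad L) := by
  have : allBad L = ⋂ i ∈ {i | i ∈ L}, {ω : Omega | ω i = true} := by
    ext ω; simp [allBad]
  rw [this]
  exact .biInter L.finite_toSet.countable fun i _ => measurableSet_eval_eq_true i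

lemma measurableSet_extSigma_allBad {L : List Site} (h0 : (0 : Site) ∉ L) :
    MeasurableSet[extSigma] (allBad L) := by
  rw [extSigma, MeasurableSpace.measurableSet_comap]
  refine ⟨⋂ j ∈ {j : {j : Site // j ≠ 0} | (j : Site) ∈ L}, (fun η => η j) ⁻¹' {true},
    .biInter (L.finite_toSet.countable.preimage Subtype.coe_injective)
      fun j _ => measurable_pi_apply j (measurableSet_singleton _), ?_⟩
  ext ω
  simp only [allBad, Set.mem_preimage, Set.mem_iInter, Set.mem_ofPred_eq, Set.mem_singleton_iff]
  exact ⟨fun h i hi => h ⟨i, fun he => h0 (he ▸ hi)⟩ hi, fun h j hj => h j hj⟩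

lemma extSigma_le : extSigma ≤ (inferInstance : MeasurableSpace Omega) :=
  Measurable.comap_le (measurable_pi_lambda _ fun _ => measurable_pi_apply _)

lemma condBadProb_nonneg : 0 ≤ᵐ[Q] condBadProb Q :=
  condExp_nonneg (.of_forall fun _ => Set.indicator_nonneg (fun _ _ => zero_le_one) _)

lemma condBadProb_le_one [IsProbabilityMeasure Q] : condBadProb Q ≤ᵐ[Q] fun _ => 1 := by
  have := condExp_mono (m := extSigma) ((integrable_const (μ := Q) (1 : ℝ)).indicator
    (measurableSet_eval_eq_true 0)) (integrable_const 1)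
    (.of_forall fun _ => Set.indicator_le_self' (fun _ _ => zero_le_one) _)
  rwa [condExp_const extSigma_le] at this

lemma badParam_nonneg [IsProbabilityMeasure Q] : 0 ≤ badParam Q :=
  haveI : (ae Q).NeBot := ae_neBot.mpr (IsProbabilityMeasure.ne_zero Q)
  Filter.le_limsup_of_frequently_le (condBadProb_nonneg Q).frequently
    ⟨1, Filter.eventually_map.mpr (condBadProb_le_one Q)⟩

lemma condBadProb_le_badParam [IsProbabilityMeasure Q] :
    condBadProb Q ≤ᵐ[Q] fun _ => badParam Q :=
  ae_le_essSup ⟨1, Filter.eventually_map.mpr (condBadProb_le_one Q)⟩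

lemma measureReal_inter_le_badParam_mul [IsProbabilityMeasure Q] {A : Set Omega}
    (hA : MeasurableSet[extSigma] A) :
    Q.real ({ω | ω 0 = true} ∩ A) ≤ badParam Q * Q.real A := by
  have hE := measurableSet_eval_eq_true 0
  calc Q.real ({ω | ω 0 = true} ∩ A)
      = ∫ ω in A, Set.indicator {ω : Omega | ω 0 = true} (fun _ => (1 : ℝ)) ω ∂Q := by
        rw [setIntegral_indicator hE, setIntegral_const, smul_eq_mul, mul_one, Set.inter_comm]
    _ = ∫ ω in A, condBadProb Q ω ∂Q :=
        (setIntegral_condExp extSigma_le ((integrable_const 1).indicator hE) hA).symm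
    _ ≤ ∫ _ in A, badParam Q ∂Q := integral_mono_ae integrable_condExp.restrict
        (integrable_const _) (ae_restrict_of_ae (condBadProb_le_badParam Q))
    _ = badParam Q * Q.real A := by rw [setIntegral_const, smul_eq_mul, mul_comm]

variable {Q}

lemma TransInvariant.measure_allBad_map_sub (hinv : TransInvariant Q) (L : List Site)
    (i : Site) :
    Q (allBad (L.map (· - i))) = Q (allBad L) := by
  have hshift : Measurable fun (ω : Omega) (x : Site) => ω (x + i) :=
    measurable_pi_lambda _ fun _ => measurable_pi_apply _
  have : allBad L = (fun (ω : Omega) (x : Site) => ω (x + i)) ⁻¹' allBad (L.map (· - i)) := by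
    ext ω
    simp only [allBad, Set.mem_preimage, Set.mem_ofPred_eq, List.forall_mem_map, sub_add_cancel]
  rw [this, ← Measure.map_apply hshift (measurableSet_allBad _), hinv i]

lemma TransInvariant.measureReal_allBad_le [IsProbabilityMeasure Q] (hinv : TransInvariant Q)
    {L : List Site} (hL : L.Nodup) : Q.real (allBad L) ≤ badParam Q ^ L.length := by
  induction L with
  | nil => simp [allBad]
  | cons i L ih =>
    obtain ⟨hiL, hL⟩ := List.nodup_cons.mp hL
    have h0 : (0 : Site) ∉ L.map (· - i) := by simpa [sub_eq_zero] using hiL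
    have hsplit : allBad ((i :: L).map (· - i)) = {ω | ω 0 = true} ∩ allBad (L.map (· - i)) := by
      ext ω; simp [allBad]
    calc Q.real (allBad (i :: L))
        = Q.real ({ω | ω 0 = true} ∩ allBad (L.map (· - i))) := by
          rw [measureReal_def, ← hinv.measure_allBad_map_sub, hsplit, measureReal_def]
      _ ≤ badParam Q * Q.real (allBad (L.map (· - i))) :=
          measureReal_inter_le_badParam_mul Q (measurableSet_extSigma_allBad h0)
      _ ≤ badParam Q * badParam Q ^ L.length := by
          gcongr
          · exact badParam_nonneg Q
          · rw [measureReal_def, hinv.measure_allBad_map_sub, ← measureReal_def]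
            exact ih hL
      _ = badParam Q ^ (i :: L).length := by rw [List.length_cons, pow_succ']

end Probability

lemma pow_le_exp_mul_log {p : ℝ} (hp : 0 ≤ p) (n : ℕ) : p ^ n ≤ Real.exp (n * Real.log p) := by
  rcases hp.eq_or_lt with rfl | hp
  · exact (pow_le_one₀ le_rfl zero_le_one).trans (by simp)
  · rw [Real.exp_nat_mul, Real.exp_log hp]

theorem doubly_exponential_badness_general (Γ γ : ℕ → ℝ)
    (hΓpos : ∀ k, 1 ≤ k → 0 < Γ k) (hγpos : ∀ k, 1 ≤ k → 0 < γ k)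
    (hsteep : ∀ k, 1 ≤ k → 5 ≤ Γ (k + 1) / thetaSeq Γ γ k)
    (ha0 : Summable fun k : ℕ =>
      (2 : ℝ) ^ (-(k : ℤ)) * Real.log ((2 * (Γ (k + 1) + γ (k + 1)) + 1) ^ 2))
    (Q : Measure Omega) [IsProbabilityMeasure Q] (hinv : TransInvariant Q) :
    ∀ (x : Site) (k : ℕ),
      Q {ω | x ∈ BB Γ γ ω k} ≤
        ENNReal.ofReal (Real.exp (-(-Real.log (badParam Q) - aZero Γ γ / 2) * 2 ^ k)) := by
  intro x k
  have hΓ k hk : 0 ≤ Γ k := (hΓpos k hk).le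
  have hγ k hk : 0 ≤ γ k := (hγpos k hk).le
  have hR k : 0 ≤ Γ (k + 1) + γ (k + 1) := add_nonneg (hΓ _ k.succ_pos) (hγ _ k.succ_pos)
  set F := (doublingTree (fun j => Γ j + γ j) k x).filter List.Nodup
  have hcover : {ω | x ∈ BB Γ γ ω k} ⊆ ⋃ L ∈ F, allBad L := fun ω hω => by
    obtain ⟨L, hL, hnd, hbad, -⟩ := exists_mem_doublingTree_of_mem_BB hΓ hγ hsteep hω
    exact Set.mem_biUnion (Finset.mem_filter.mpr ⟨hL, hnd⟩) hbad
  have hcard : (F.card : ℝ) ≤ Real.exp (2 ^ k * aZero Γ γ / 2) :=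
    (Nat.cast_le.mpr (Finset.card_filter_le _ _)).trans (card_doublingTree_le_exp_aZero hR ha0 k x)
  rw [← ofReal_measureReal]
  gcongr
  calc Q.real {ω | x ∈ BB Γ γ ω k}
      ≤ ∑ L ∈ F, Q.real (allBad L) :=
        (measureReal_mono hcover (measure_ne_top _ _)).trans (measureReal_biUnion_finset_le _ _)
    _ ≤ ∑ _L ∈ F, badParam Q ^ 2 ^ k := Finset.sum_le_sum fun L hL => by
        rw [← length_of_mem_doublingTree (Finset.mem_filter.mp hL).1]
        exact hinv.measureReal_allBad_le (Finset.mem_filter.mp hL).2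
    _ = F.card * badParam Q ^ 2 ^ k := by rw [Finset.sum_const, nsmul_eq_mul]
    _ ≤ Real.exp (2 ^ k * aZero Γ γ / 2) * Real.exp ((2 ^ k : ℕ) * Real.log (badParam Q)) :=
        mul_le_mul hcard (pow_le_exp_mul_log (badParam_nonneg Q) _)
          (pow_nonneg (badParam_nonneg Q) _) (Real.exp_pos _).le
    _ = _ := by rw [← Real.exp_add]; push_cast; ring_nf

/-- Doubly exponential decay of badness.  Under the steepness conditions on
`Γ, γ`, if `Q` is a translation-invariant probability measure on `Ω` whose conditional
badness parameter `p` satisfies `p < e^{-a₀/2}`, then with `a := -log p - a₀/2 > 0` one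
has `Q(x ∈ BB_k) ≤ exp(-a 2^k)` for every `x` and `k ≥ 0`. -/
theorem doubly_exponential_badness (Γ γ : ℕ → ℝ)
    (hΓpos : ∀ k, 1 ≤ k → 0 < Γ k) (hγpos : ∀ k, 1 ≤ k → 0 < γ k)
    (hΓmono : ∀ k, 1 ≤ k → Γ k < Γ (k + 1)) (hγmono : ∀ k, 1 ≤ k → γ k < γ (k + 1))
    (hΓ1 : 2 ≤ Γ 1) (hΓγ : ∀ k, 1 ≤ k → Γ k < γ k / 2)
    (hsteep : ∀ k, 1 ≤ k → 5 ≤ Γ (k + 1) / thetaSeq Γ γ k)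
    (ha0 : Summable fun k : ℕ =>
      (2 : ℝ) ^ (-(k : ℤ)) * Real.log ((2 * (Γ (k + 1) + γ (k + 1)) + 1) ^ 2))
    (Q : Measure Omega) [IsProbabilityMeasure Q] (hinv : TransInvariant Q)
    (hp : badParam Q < Real.exp (-(aZero Γ γ) / 2)) :
    ∀ (x : Site) (k : ℕ),
      Q {ω | x ∈ BB Γ γ ω k} ≤
        ENNReal.ofReal (Real.exp (-(-Real.log (badParam Q) - aZero Γ γ / 2) * 2 ^ k)) :=
  doubly_exponential_badness_general Γ γ hΓpos hγpos hsteep ha0 Q hinv
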